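/- arXiv:2110.00789 — 6 statements merged into one kernel-verified Lean document; each statement's English description precedes it below -/
import Mathlib

section
/- Let D be a finite loopless directed graph. If D is source-free and has a kernel, then D has a quasi-kernel Q with 2·|Q| ≤ |V(D)|. -/
/-- A set is independent in the digraph with arc relation `A` if no two of its
vertices are connected by an arc in either direction. -/
def Independent {V : Type*} (A : V → V → Prop) (S : Set V) : Prop :=
  ∀ u ∈ S, ∀ v ∈ S, ¬ A u v

/-- A kernel: an independent set such that every vertex outside it has an
ingoing arc from the set. -/
def IsKernel {V : Type*} (A : V → V → Prop) (K : Set V) : Prop :=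
  Independent A K ∧ ∀ v ∉ K, ∃ u ∈ K, A u v

/-- A quasi-kernel: an independent set from which every vertex is reachable
in at most two steps. -/
def IsQuasiKernel {V : Type*} (A : V → V → Prop) (Q : Set V) : Prop :=
  Independent A Q ∧
    ∀ v : V, v ∈ Q ∨ (∃ u ∈ Q, A u v) ∨ (∃ u ∈ Q, ∃ w : V, A u w ∧ A w v)

/-- A set `Q` is inward dominated if every arc entering `Q` from outside is
answered by an arc from `Q` to its tail. -/
def InwardDominated {V : Type*} (A : V → V → Prop) (Q : Set V) : Prop :=
  ∀ w ∈ Q, ∀ v ∉ Q, A v w → ∃ u ∈ Q, A u v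

/-- `v` is an external private out-neighbor (epon) of `u` with regard to `S`. -/
def IsEpon {V : Type*} (A : V → V → Prop) (S : Set V) (u v : V) : Prop :=
  v ∉ S ∧ A u v ∧ ∀ w ∈ S, A w v → w = u

/-- `u` has an external private out-neighbor with regard to `S`. -/
def HasEpon {V : Type*} (A : V → V → Prop) (S : Set V) (u : V) : Prop :=
  ∃ v : V, IsEpon A S u v

/-- A digraph is source-free if every vertex has an ingoing arc. -/
def SourceFree {V : Type*} (A : V → V → Prop) : Prop :=
  ∀ v : V, ∃ u : V, A u v

/-!
Take a quasi-kernel `Q` that is inward dominated and inclusion-minimal with these two properties;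
the kernel is one such set, so a minimal one exists. If some `u ∈ Q` had no external private
out-neighbor, every out-neighbor of `u` outside `Q` would have a second in-neighbor in `Q`, and
`Q \ {u}` would still be an inward dominated quasi-kernel (`u` itself is reached through an
in-neighbor, which exists since the digraph is source-free). So every vertex of `Q` has a private
out-neighbor outside `Q`; these are pairwise distinct, whence `|Q| ≤ |V \ Q|`.
-/

section

variable {V : Type*} {A : V → V → Prop} {Q : Set V} {u : V}

lemma IsKernel.inwardDominated {K : Set V} (hK : IsKernel A K) : InwardDominated A K :=
  fun _ _ v hv _ ↦ hK.2 v hv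

lemma IsKernel.isQuasiKernel {K : Set V} (hK : IsKernel A K) : IsQuasiKernel A K := by
  refine ⟨hK.1, fun v ↦ ?_⟩
  by_cases hv : v ∈ K
  · exact Or.inl hv
  · exact Or.inr (Or.inl (hK.2 v hv))

lemma exists_mem_diff_singleton_adj_of_not_hasEpon (hu : ¬ HasEpon A Q u) {x v : V}
    (hx : x ∈ Q) (hv : v ∉ Q) (hxv : A x v) : ∃ w ∈ Q \ {u}, A w v := by
  by_cases hxu : x = u
  · subst hxu
    by_contra! h
    exact hu ⟨v, hv, hxv, fun w hw hwv ↦ by_contra fun hwx ↦ h w ⟨hw, hwx⟩ hwv⟩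
  · exact ⟨x, ⟨hx, hxu⟩, hxv⟩

lemma InwardDominated.diff_singleton (hQ : InwardDominated A Q) (hind : Independent A Q)
    (hu : ¬ HasEpon A Q u) : InwardDominated A (Q \ {u}) := by
  intro w hw v hv hvw
  have hvQ : v ∉ Q := fun hvQ ↦ hind v hvQ w hw.1 hvw
  obtain ⟨x, hx, hxv⟩ := hQ w hw.1 v hvQ hvw
  exact exists_mem_diff_singleton_adj_of_not_hasEpon hu hx hvQ hxv

lemma IsQuasiKernel.diff_singleton (hQ : IsQuasiKernel A Q) (hsf : SourceFree A)
    (hdom : InwardDominated A Q) (hu : ¬ HasEpon A Q u) : IsQuasiKernel A (Q \ {u}) := by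
  obtain ⟨hind, hcov⟩ := hQ
  have reroute {x v : V} (hx : x ∈ Q) (hv : v ∉ Q) (hxv : A x v) :=
    exists_mem_diff_singleton_adj_of_not_hasEpon hu hx hv hxv
  refine ⟨fun a ha b hb ↦ hind a ha.1 b hb.1, fun v ↦ ?_⟩
  rcases hcov v with hv | ⟨x, hx, hxv⟩ | ⟨x, hx, w, hxw, hwv⟩
  · by_cases hvu : v = u
    · obtain ⟨p, hpv⟩ := hsf v
      have hpQ : p ∉ Q := fun hpQ ↦ hind p hpQ v hv hpv
      obtain ⟨x, hx, hxp⟩ := hdom v hv p hpQ hpv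
      obtain ⟨y, hy, hyp⟩ := reroute hx hpQ hxp
      exact Or.inr (Or.inr ⟨y, hy, p, hyp, hpv⟩)
    · exact Or.inl ⟨hv, hvu⟩
  · exact Or.inr (Or.inl (reroute hx (fun hvQ ↦ hind x hx v hvQ hxv) hxv))
  · obtain ⟨y, hy, hyw⟩ := reroute hx (fun hwQ ↦ hind x hx w hwQ hxw) hxw
    exact Or.inr (Or.inr ⟨y, hy, w, hyw, hwv⟩)

lemma two_mul_ncard_le_card_of_forall_hasEpon [Fintype V] (h : ∀ u ∈ Q, HasEpon A Q u) :
    2 * Q.ncard ≤ Fintype.card V := by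
  choose! f hf using h
  have hinj : Set.InjOn f Q := fun a ha b hb hab ↦ (hf b hb).2.2 a ha (hab ▸ (hf a ha).2.1)
  have hle : Q.ncard ≤ Qᶜ.ncard :=
    Set.ncard_le_ncard_of_injOn f (fun u hu ↦ (hf u hu).1) hinj (Set.toFinite _)
  have hcard : Q.ncard + Qᶜ.ncard = Fintype.card V := by
    rw [← Nat.card_eq_fintype_card]
    exact Set.ncard_add_ncard_compl Q
  omega

end

theorem main_theorem_general {V : Type*} [Fintype V] (A : V → V → Prop)
    (hsf : SourceFree A) (K : Set V)
    (hK : IsKernel A K) :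
    ∃ Q : Set V, IsQuasiKernel A Q ∧ 2 * Q.ncard ≤ Fintype.card V := by
  obtain ⟨Q, -, hQ⟩ := exists_minimal_le_of_wellFoundedLT
    (fun Q ↦ IsQuasiKernel A Q ∧ InwardDominated A Q) K ⟨hK.isQuasiKernel, hK.inwardDominated⟩
  obtain ⟨hqk, hdom⟩ := hQ.prop
  refine ⟨Q, hqk, two_mul_ncard_le_card_of_forall_hasEpon (A := A) fun u hu ↦ ?_⟩
  by_contra hno
  exact hQ.not_prop_of_ssubset (Set.sdiff_singleton_ssubset.2 hu)
    ⟨hqk.diff_singleton hsf hdom hno, hdom.diff_singleton hqk.1 hno⟩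

/-- A source-free finite loopless digraph with a kernel has a quasi-kernel of
size at most half the number of vertices. -/
theorem main_theorem {V : Type*} [Fintype V] (A : V → V → Prop)
    (hirr : Irreflexive A) (hsf : SourceFree A) (K : Set V)
    (hK : IsKernel A K) :
    ∃ Q : Set V, IsQuasiKernel A Q ∧ 2 * Q.ncard ≤ Fintype.card V :=
  main_theorem_general A hsf K hK
end

section
/- Let D be a finite loopless source-free directed graph. If D has an inward dominated quasi-kernel, then D has a quasi-kernel Q with 2·|Q| ≤ |V(D)|. -/
section

variable {V : Type*} {A : V → V → Prop} {S : Set V} {u v w : V}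

theorem Independent.mono {T : Set V} (hS : Independent A S) (hT : T ⊆ S) : Independent A T :=
  fun u hu v hv => hS u (hT hu) v (hT hv)

theorem Independent.notMem_of_adj (hS : Independent A S) (hu : u ∈ S) (huv : A u v) : v ∉ S :=
  fun hv => hS u hu v hv huv

theorem Independent.notMem_of_adj' (hS : Independent A S) (hu : u ∈ S) (hvu : A v u) : v ∉ S :=
  fun hv => hS v hv u hu hvu

theorem Independent.exists_adj_of_not_hasEpon (hS : Independent A S) (hw : ¬HasEpon A S w)
    (hu : u ∈ S) (huv : A u v) : ∃ u' ∈ S \ {w}, A u' v := by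
  by_cases huw : u = w
  · subst huw
    by_contra! hno
    refine hw ⟨v, hS.notMem_of_adj hu huv, huv, fun u' hu' hu'v => ?_⟩
    by_contra hne
    exact hno u' ⟨hu', hne⟩ hu'v
  · exact ⟨u, ⟨hu, huw⟩, huv⟩

theorem InwardDominated.diff_singleton_s6 (hS : Independent A S) (hid : InwardDominated A S)
    (hw : ¬HasEpon A S w) : InwardDominated A (S \ {w}) := by
  intro x hx v _ hvx
  obtain ⟨u, hu, huv⟩ := hid x hx.1 v (hS.notMem_of_adj' hx.1 hvx) hvx
  exact hS.exists_adj_of_not_hasEpon hw hu huv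

theorem IsQuasiKernel.diff_singleton_s6 (hsf : SourceFree A) (hK : IsQuasiKernel A S)
    (hid : InwardDominated A S) (hw : ¬HasEpon A S w) : IsQuasiKernel A (S \ {w}) := by
  refine ⟨hK.1.mono Set.sdiff_subset, fun v => ?_⟩
  rcases hK.2 v with hv | ⟨u, hu, huv⟩ | ⟨u, hu, x, hux, hxv⟩
  · by_cases hvw : v = w
    · subst hvw
      obtain ⟨x, hxv⟩ := hsf v
      obtain ⟨u, hu, hux⟩ := hid v hv x (hK.1.notMem_of_adj' hv hxv) hxv
      obtain ⟨u', hu', hu'x⟩ := hK.1.exists_adj_of_not_hasEpon hw hu hux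
      exact .inr (.inr ⟨u', hu', x, hu'x, hxv⟩)
    · exact .inl ⟨hv, hvw⟩
  · exact .inr (.inl (hK.1.exists_adj_of_not_hasEpon hw hu huv))
  · obtain ⟨u', hu', hu'x⟩ := hK.1.exists_adj_of_not_hasEpon hw hu hux
    exact .inr (.inr ⟨u', hu', x, hu'x, hxv⟩)

theorem exists_isQuasiKernel_forall_hasEpon [Finite V] (hsf : SourceFree A)
    (hK : IsQuasiKernel A S) (hid : InwardDominated A S) :
    ∃ Q : Set V, IsQuasiKernel A Q ∧ ∀ u ∈ Q, HasEpon A Q u := by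
  obtain ⟨Q, hQ⟩ := exists_minimal_of_wellFoundedLT
    (fun Q : Set V => IsQuasiKernel A Q ∧ InwardDominated A Q) ⟨S, hK, hid⟩
  refine ⟨Q, hQ.prop.1, fun u hu => ?_⟩
  by_contra hnot
  have hsmaller : Q \ {u} = Q := hQ.eq_of_subset
    ⟨hQ.prop.1.diff_singleton_s6 hsf hQ.prop.2 hnot, hQ.prop.2.diff_singleton_s6 hQ.prop.1.1 hnot⟩
    Set.sdiff_subset
  exact (hsmaller ▸ hu).2 rfl

theorem ncard_le_ncard_compl_of_forall_hasEpon [Finite V] (h : ∀ u ∈ S, HasEpon A S u) :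
    S.ncard ≤ Sᶜ.ncard := by
  classical
  choose! f hf using h
  refine Set.ncard_le_ncard_of_injOn f (fun u hu => (hf u hu).1) (fun u hu u' hu' hfu => ?_)
    (Set.toFinite _)
  exact (hf u' hu').2.2 u hu (hfu ▸ (hf u hu).2.1)

end

theorem inwardDominated_quasiKernel_half_general {V : Type*} [Fintype V]
    (A : V → V → Prop) (hsf : SourceFree A) (K : Set V)
    (hK : IsQuasiKernel A K) (hid : InwardDominated A K) :
    ∃ Q : Set V, IsQuasiKernel A Q ∧ 2 * Q.ncard ≤ Fintype.card V := by
  obtain ⟨Q, hQ, hepon⟩ := exists_isQuasiKernel_forall_hasEpon hsf hK hid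
  have hle := ncard_le_ncard_compl_of_forall_hasEpon hepon
  have hsum : Q.ncard + Qᶜ.ncard = Fintype.card V :=
    Nat.card_eq_fintype_card (α := V) ▸ Set.ncard_add_ncard_compl Q
  exact ⟨Q, hQ, by omega⟩

/-- A source-free finite loopless digraph with an inward dominated
quasi-kernel has a quasi-kernel of size at most half the number of vertices. -/
theorem inwardDominated_quasiKernel_half {V : Type*} [Fintype V]
    (A : V → V → Prop) (hirr : Irreflexive A) (hsf : SourceFree A) (K : Set V)
    (hK : IsQuasiKernel A K) (hid : InwardDominated A K) :
    ∃ Q : Set V, IsQuasiKernel A Q ∧ 2 * Q.ncard ≤ Fintype.card V :=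
  inwardDominated_quasiKernel_half_general A hsf K hK hid
end

section
/- Let D be a finite loopless directed graph and let K be an inward dominated quasi-kernel of D. If u ∈ K has no external private out-neighbor with regard to K, then K − {u} is inward dominated; that is, for all v ∈ K − {u} and w ∈ V(D) − (K − {u}) with w ⟶ v, there exists y ∈ K − {u} such that y ⟶ w. -/
/-
If an arc `w ⟶ v` enters `K - {u}` from outside, then `w ∉ K` (for `w = u` this is the
independence of `K`), so inward domination of `K` gives `x ∈ K` with `x ⟶ w`. If `x = u`, then
`w` is an out-neighbor of `u` outside `K`, and since it is not a private one, some other vertex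
of `K` dominates it.
-/

section

variable {V : Type*} {A : V → V → Prop} {K : Set V} {u v w : V}

theorem Independent.notMem_of_adj_of_notMem_diff_singleton (hK : Independent A K) (hv : v ∈ K)
    (hw : w ∉ K \ {u}) (hwv : A w v) : w ∉ K := by
  intro hwK
  rcases eq_or_ne w u with rfl | hwu
  · exact hK w hwK v hv hwv
  · exact hw ⟨hwK, hwu⟩

theorem exists_mem_diff_singleton_adj_of_not_hasEpon_s8 (hnep : ¬ HasEpon A K u) (hw : w ∉ K)
    (huw : A u w) : ∃ z ∈ K \ {u}, A z w := by
  by_contra hnone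
  refine hnep ⟨w, hw, huw, fun z hz hzw => ?_⟩
  by_contra hzu
  exact hnone ⟨z, ⟨hz, hzu⟩, hzw⟩

theorem InwardDominated.diff_singleton_of_not_hasEpon (hid : InwardDominated A K)
    (hK : Independent A K) (hnep : ¬ HasEpon A K u) : InwardDominated A (K \ {u}) := by
  rintro v ⟨hv, -⟩ w hw hwv
  have hwK : w ∉ K := hK.notMem_of_adj_of_notMem_diff_singleton hv hw hwv
  obtain ⟨x, hx, hxw⟩ := hid v hv w hwK hwv
  rcases eq_or_ne x u with rfl | hxu
  · exact exists_mem_diff_singleton_adj_of_not_hasEpon_s8 hnep hwK hxw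
  · exact ⟨x, ⟨hx, hxu⟩, hxw⟩

end

theorem remove_no_epon_inwardDominated_general {V : Type*}
    (A : V → V → Prop) (K : Set V)
    (hK : IsQuasiKernel A K) (hid : InwardDominated A K) (u : V)
    (hnep : ¬ HasEpon A K u) : InwardDominated A (K \ {u}) :=
  hid.diff_singleton_of_not_hasEpon hK.1 hnep

/-- Removing from an inward dominated quasi-kernel a vertex with no epon
leaves an inward dominated set. -/
theorem remove_no_epon_inwardDominated {V : Type*} [Fintype V]
    (A : V → V → Prop) (hirr : Irreflexive A) (K : Set V)
    (hK : IsQuasiKernel A K) (hid : InwardDominated A K) (u : V) (hu : u ∈ K)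
    (hnep : ¬ HasEpon A K u) : InwardDominated A (K \ {u}) :=
  remove_no_epon_inwardDominated_general A K hK hid u hnep
end

section
/- Let D be a finite loopless directed graph, let K ⊆ V(D), and let u ∈ K. Define S = {v ∈ K : v has no external private out-neighbor with regard to K} and R = {v ∈ K − {u} : v has no external private out-neighbor with regard to K − {u}}. If u ∈ S, then R ⊊ S, and hence |R| < |S|. -/
theorem IsEpon.of_subset {V : Type*} {A : V → V → Prop} {T K : Set V} {u v : V}
    (hTK : T ⊆ K) (h : IsEpon A K u v) : IsEpon A T u v :=
  ⟨fun hvT => h.1 (hTK hvT), h.2.1, fun w hwT hwv => h.2.2 w (hTK hwT) hwv⟩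

theorem HasEpon.of_subset {V : Type*} {A : V → V → Prop} {T K : Set V} {u : V}
    (hTK : T ⊆ K) (h : HasEpon A K u) : HasEpon A T u :=
  h.imp fun _ => IsEpon.of_subset hTK

theorem setOf_not_hasEpon_subset {V : Type*} (A : V → V → Prop) {T K : Set V}
    (hTK : T ⊆ K) : {v ∈ T | ¬ HasEpon A T v} ⊆ {v ∈ K | ¬ HasEpon A K v} :=
  fun _ hv => ⟨hTK hv.1, fun hK => hv.2 (hK.of_subset hTK)⟩

theorem no_epon_set_shrinks_general {V : Type*} [Fintype V] (A : V → V → Prop)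
    (K : Set V) (u : V)
    (S : Set V) (hS : S = {v ∈ K | ¬ HasEpon A K v})
    (R : Set V) (hR : R = {v ∈ K \ {u} | ¬ HasEpon A (K \ {u}) v})
    (huS : u ∈ S) : R ⊂ S ∧ R.ncard < S.ncard := by
  have hRS : R ⊆ S := hR ▸ hS ▸ setOf_not_hasEpon_subset A Set.sdiff_subset
  have huR : u ∉ R := fun h => (hR ▸ h).1.2 rfl
  have hRS_ssub : R ⊂ S := (Set.ssubset_iff_of_subset hRS).2 ⟨u, huS, huR⟩
  exact ⟨hRS_ssub, Set.ncard_lt_ncard hRS_ssub S.toFinite⟩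

/-- Removing a vertex with no epon strictly shrinks the set of vertices
without an epon. -/
theorem no_epon_set_shrinks {V : Type*} [Fintype V] (A : V → V → Prop)
    (hirr : Irreflexive A) (K : Set V) (u : V) (hu : u ∈ K)
    (S : Set V) (hS : S = {v ∈ K | ¬ HasEpon A K v})
    (R : Set V) (hR : R = {v ∈ K \ {u} | ¬ HasEpon A (K \ {u}) v})
    (huS : u ∈ S) : R ⊂ S ∧ R.ncard < S.ncard :=
  no_epon_set_shrinks_general A K u S hS R hR huS
end

section
/- Let D be a finite loopless source-free directed graph and let K be an inward dominated quasi-kernel of D. If u ∈ K has no external private out-neighbor with regard to K, then there exists a vertex u' ∈ V(D) − K with u' ⟶ u and a vertex w ∈ K − {u} with w ⟶ u'; in particular, u is reachable in at most two steps from K − {u}. -/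
theorem Independent.notMem_of_arc {V : Type*} {A : V → V → Prop} {S : Set V}
    (hS : Independent A S) {u v : V} (hu : u ∈ S) (hvu : A v u) : v ∉ S :=
  fun hv => hS v hv u hu hvu

theorem exists_mem_diff_singleton_arc_of_not_hasEpon {V : Type*} {A : V → V → Prop}
    {S : Set V} {u v : V} (hnep : ¬ HasEpon A S u) (hv : v ∉ S) (hdom : ∃ w ∈ S, A w v) :
    ∃ w ∈ S \ {u}, A w v := by
  by_contra! hpriv
  obtain ⟨w, hwS, hwv⟩ := hdom
  have hwu : w = u := by_contra fun hne => hpriv w ⟨hwS, hne⟩ hwv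
  subst hwu
  exact hnep ⟨v, hv, hwv, fun x hxS hxv => by_contra fun hne => hpriv x ⟨hxS, hne⟩ hxv⟩

theorem no_epon_two_step_reach_general {V : Type*} (A : V → V → Prop)
    (hsf : SourceFree A) (K : Set V)
    (hK : IsQuasiKernel A K) (hid : InwardDominated A K) (u : V) (hu : u ∈ K)
    (hnep : ¬ HasEpon A K u) :
    ∃ u' : V, u' ∉ K ∧ A u' u ∧ ∃ w ∈ K \ {u}, A w u' := by
  obtain ⟨u', hu'u⟩ := hsf u
  have hu'K : u' ∉ K := hK.1.notMem_of_arc hu hu'u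
  exact ⟨u', hu'K, hu'u,
    exists_mem_diff_singleton_arc_of_not_hasEpon hnep hu'K (hid u hu u' hu'K hu'u)⟩

/-- In a source-free digraph, if `u` is a vertex of an inward dominated
quasi-kernel `K` with no epon with regard to `K`, then `u` is reachable in
exactly two steps from `K − {u}`: there are `u' ∉ K` with `u' ⟶ u` and
`w ∈ K − {u}` with `w ⟶ u'`. -/
theorem no_epon_two_step_reach {V : Type*} [Fintype V] (A : V → V → Prop)
    (hirr : Irreflexive A) (hsf : SourceFree A) (K : Set V)
    (hK : IsQuasiKernel A K) (hid : InwardDominated A K) (u : V) (hu : u ∈ K)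
    (hnep : ¬ HasEpon A K u) :
    ∃ u' : V, u' ∉ K ∧ A u' u ∧ ∃ w ∈ K \ {u}, A w u' :=
  no_epon_two_step_reach_general A hsf K hK hid u hu hnep
end

section
/- Let D be a finite loopless directed graph, let K be a quasi-kernel of D, let u ∈ K have no external private out-neighbor with regard to K, and let v ∈ V(D) − K with v ≠ u. Then v can be reached in at most two steps from a vertex of K − {u}. -/
theorem exists_arc_from_diff_singleton_of_not_hasEpon {V : Type*} {A : V → V → Prop}
    {S : Set V} {u x w : V} (hnep : ¬ HasEpon A S u) (hw : w ∉ S) (hx : x ∈ S)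
    (hxw : A x w) : ∃ y ∈ S \ {u}, A y w := by
  by_cases hxu : x = u
  · subst hxu
    by_contra! hnone
    exact hnep ⟨w, hw, hxw, fun y hy hyw => by_contra fun hyx => hnone y ⟨hy, hyx⟩ hyw⟩
  · exact ⟨x, ⟨hx, hxu⟩, hxw⟩

theorem outside_vertex_two_step_reach_general {V : Type*}
    (A : V → V → Prop) (K : Set V)
    (hK : IsQuasiKernel A K) (u : V) (hnep : ¬ HasEpon A K u)
    (v : V) (hv : v ∉ K) :
    (∃ x ∈ K \ {u}, A x v) ∨ (∃ x ∈ K \ {u}, ∃ w : V, A x w ∧ A w v) := by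
  obtain ⟨hind, hreach⟩ := hK
  rcases hreach v with hvK | ⟨x, hx, hxv⟩ | ⟨x, hx, w, hxw, hwv⟩
  · exact absurd hvK hv
  · exact Or.inl (exists_arc_from_diff_singleton_of_not_hasEpon hnep hv hx hxv)
  · have hw : w ∉ K := fun hwK => hind x hx w hwK hxw
    obtain ⟨y, hy, hyw⟩ := exists_arc_from_diff_singleton_of_not_hasEpon hnep hw hx hxw
    exact Or.inr ⟨y, hy, w, hyw, hwv⟩

/-- If `u` is a vertex of a quasi-kernel `K` with no epon with regard to `K`,
then every vertex `v ∉ K` with `v ≠ u` can be reached in at most two steps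
from a vertex of `K − {u}`. -/
theorem outside_vertex_two_step_reach {V : Type*} [Fintype V]
    (A : V → V → Prop) (hirr : Irreflexive A) (K : Set V)
    (hK : IsQuasiKernel A K) (u : V) (hu : u ∈ K) (hnep : ¬ HasEpon A K u)
    (v : V) (hv : v ∉ K) (hvu : v ≠ u) :
    (∃ x ∈ K \ {u}, A x v) ∨ (∃ x ∈ K \ {u}, ∃ w : V, A x w ∧ A w v) :=
  outside_vertex_two_step_reach_general A K hK u hnep v hv
end
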